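/- arXiv:1004.2223 — 2 statements merged into one kernel-verified Lean document; each statement's English description precedes it below -/
import Mathlib

section
/- If $p$ is a nonzero $m$-restricted Laurent polynomial in $X_1, X_2$ over an integral domain with $D(p) \neq 0$, where $D(f) = (f - {}^s f)/(1 - X_1 X_2^{-1})$, then the largest power of $X_2$ occurring in $D(p)$ is strictly greater than the largest power of $X_1$ occurring in $D(p)$. -/
noncomputable section

/-- The Laurent polynomial ring `A[X₁^{±1}, X₂^{±1}]`. -/
abbrev Lau (A : Type) [CommRing A] : Type := AddMonoidAlgebra A (ℤ × ℤ)

variable (A : Type) [CommRing A]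

/-- The monomial `X₁^i X₂^j`. -/
def Xm (i j : ℤ) : Lau A := AddMonoidAlgebra.single (i, j) 1

/-- The automorphism `s` interchanging `X₁` and `X₂`. -/
def sw (p : Lau A) : Lau A := AddMonoidAlgebra.ofCoeff (Finsupp.equivMapDomain (Equiv.prodComm ℤ ℤ) p.coeff)

/-- `p` is `m`-restricted: all monomials `X₁^i X₂^j` occurring in `p`
satisfy `0 ≤ i, j ≤ m-1`. -/
def Res (m : ℕ) (p : Lau A) : Prop :=
  ∀ ab ∈ p.coeff.support, 0 ≤ ab.1 ∧ ab.1 ≤ (m : ℤ) - 1 ∧ 0 ≤ ab.2 ∧ ab.2 ≤ (m : ℤ) - 1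

/-! Write `u = X₁X₂⁻¹`. Applying `s` to `D(1 - u) = p - ˢp` and adding the result to the original
equation gives `(D - u⁻¹ ˢD)(1 - u) = 0`, hence `D = u⁻¹ ˢD` over a domain. On coefficients this
says that `X₁^i X₂^j` occurs in `D` iff `X₁^(j-1) X₂^(i+1)` does, so every exponent of `X₁` in `D`
is exceeded by some exponent of `X₂`. -/

lemma sw_eq_domCongr (q : Lau A) :
    sw A q = AddMonoidAlgebra.domCongr A A (AddEquiv.prodComm (M := ℤ) (N := ℤ)) q := by
  ext ab
  simp [sw, Finsupp.equivMapDomain_apply]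

lemma coeff_sw (q : Lau A) (i j : ℤ) : (sw A q).coeff (i, j) = q.coeff (j, i) := by
  simp [sw, Finsupp.equivMapDomain_apply]

lemma sw_mul (q r : Lau A) : sw A (q * r) = sw A q * sw A r := by
  simp only [sw_eq_domCongr, map_mul]

lemma sw_sub (q r : Lau A) : sw A (q - r) = sw A q - sw A r := by
  simp only [sw_eq_domCongr, map_sub]

lemma sw_one : sw A (1 : Lau A) = 1 := by
  simp only [sw_eq_domCongr, map_one]

lemma sw_sw (q : Lau A) : sw A (sw A q) = q := by
  ext ⟨i, j⟩
  simp only [coeff_sw]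

lemma sw_Xm (i j : ℤ) : sw A (Xm A i j) = Xm A j i := by
  rw [sw_eq_domCongr]
  simp only [Xm, AddMonoidAlgebra.domCongr_single]
  rfl

lemma Xm_mul_Xm (i j k l : ℤ) : Xm A i j * Xm A k l = Xm A (i + k) (j + l) := by
  simp [Xm, AddMonoidAlgebra.single_mul_single]

lemma coeff_Xm_mul (i j : ℤ) (q : Lau A) (a b : ℤ) :
    (Xm A i j * q).coeff (a, b) = q.coeff (a - i, b - j) := by
  simp [Xm, AddMonoidAlgebra.coeff_single_mul_apply, neg_add_eq_sub]

lemma one_sub_Xm_ne_zero [Nontrivial A] {i j : ℤ} (hij : (i, j) ≠ 0) : 1 - Xm A i j ≠ 0 :=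
  sub_ne_zero.mpr fun h => hij ((AddMonoidAlgebra.single_left_inj one_ne_zero).mp h).symm

lemma eq_Xm_mul_sw_of_mul_one_sub_Xm_eq [IsDomain A] {D p : Lau A}
    (hD : D * (1 - Xm A 1 (-1)) = p - sw A p) : D = Xm A (-1) 1 * sw A D := by
  have hsD : sw A D * (1 - Xm A (-1) 1) = sw A p - p := by
    simpa only [sw_mul, sw_sub, sw_one, sw_Xm, sw_sw] using congrArg (sw A) hD
  have hinv : Xm A (-1) 1 * Xm A 1 (-1) = 1 := by
    rw [Xm_mul_Xm]; rfl
  have hzero : (D - Xm A (-1) 1 * sw A D) * (1 - Xm A 1 (-1)) = 0 := by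
    linear_combination hD + hsD + sw A D * hinv
  exact sub_eq_zero.mp ((mul_eq_zero.mp hzero).resolve_right (one_sub_Xm_ne_zero A (by decide)))

lemma coeff_eq_coeff_of_eq_Xm_mul_sw {D : Lau A} (h : D = Xm A (-1) 1 * sw A D) (i j : ℤ) :
    D.coeff (i, j) = D.coeff (j - 1, i + 1) := by
  conv_lhs => rw [h]
  rw [coeff_Xm_mul, coeff_sw, sub_neg_eq_add]

lemma Finset.sup_fst_lt_sup_snd {α : Type*} [LinearOrder α] {s : Finset (α × α)}
    (hs : s.Nonempty) (h : ∀ x ∈ s, ∃ y ∈ s, x.1 < y.2) :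
    s.sup (fun x => (x.1 : WithBot α)) < s.sup (fun x => (x.2 : WithBot α)) := by
  obtain ⟨x₀, hx₀⟩ := hs
  have le_sup_snd {y : α × α} (hy : y ∈ s) :
      (y.2 : WithBot α) ≤ s.sup (fun x => (x.2 : WithBot α)) :=
    Finset.le_sup (f := fun x => (x.2 : WithBot α)) hy
  refine (Finset.sup_lt_iff ((WithBot.bot_lt_coe _).trans_le (le_sup_snd hx₀))).mpr fun x hx => ?_
  obtain ⟨y, hy, hxy⟩ := h x hx
  exact (WithBot.coe_lt_coe.mpr hxy).trans_le (le_sup_snd hy)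

theorem stmt3 [IsDomain A] (p Dp : Lau A)
    (hD : Dp * (1 - Xm A 1 0 * Xm A 0 (-1)) = p - sw A p) (hDp : Dp ≠ 0) :
    Dp.coeff.support.sup (fun ab => (ab.1 : WithBot ℤ)) <
      Dp.coeff.support.sup (fun ab => (ab.2 : WithBot ℤ)) := by
  rw [Xm_mul_Xm, add_zero, zero_add] at hD
  have hcoeff := coeff_eq_coeff_of_eq_Xm_mul_sw A (eq_Xm_mul_sw_of_mul_one_sub_Xm_eq A hD)
  refine Finset.sup_fst_lt_sup_snd (Finsupp.support_nonempty_iff.mpr ?_) fun ⟨i, j⟩ hij => ?_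
  · simpa using hDp
  · refine ⟨(j - 1, i + 1), ?_, lt_add_one i⟩
    rw [Finsupp.mem_support_iff, ← hcoeff]
    exact Finsupp.mem_support_iff.mp hij
end
end

section
/- With notation as in the paper: the elements $X_1^{k-1} z$ for $0 \le k \le m-1$, where $z = (-1)^{m+1} e_m + X_1X_2\sum_{j=0}^{m-2}(-1)^j e_j H_{m-2-j}$ and multiplication is computed in $R_m$ (using the relation $f_{\mathbf v}(X_i) = 0$), are linearly independent over $A$. More precisely, when $X_1^{k-1}z$ is written in the basis of restricted monomial symmetric functions $\{m_{ij} : 0 \le i \le j \le m-1\}$, the coefficient of $m_{j(m-1)}$ is $\delta_{jk}$. -/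
noncomputable section

/-- The ring `A = ℤ[q^{±1}, v₁^{±1}, …, v_m^{±1}]`, realized as the group
algebra of `ℤ × ℤ^m` over `ℤ`. -/
abbrev Av (m : ℕ) : Type := AddMonoidAlgebra ℤ (ℤ × (Fin m → ℤ))

/-- The element `q`. -/
def qv (m : ℕ) : Av m := AddMonoidAlgebra.single (1, 0) 1

/-- The element `vᵢ`. -/
def vv (m : ℕ) (i : Fin m) : Av m := AddMonoidAlgebra.single (0, Pi.single i 1) 1

/-- The `j`-th elementary symmetric polynomial of `v₁, …, v_m`. -/
def ev (m : ℕ) (j : ℕ) : Av m :=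
  ∑ s ∈ Finset.powersetCard j (Finset.univ : Finset (Fin m)), ∏ i ∈ s, vv m i

variable (A : Type) [CommRing A]

/-- Constants. -/
def CC (a : A) : Lau A := algebraMap A (Lau A) a

/-- `f_v(X₁) = ∏ᵢ (X₁ - vᵢ)`. -/
def fv1 (m : ℕ) : Lau (Av m) := ∏ i : Fin m, (Xm (Av m) 1 0 - CC (Av m) (vv m i))

/-- `f_v(X₂) = ∏ᵢ (X₂ - vᵢ)`. -/
def fv2 (m : ℕ) : Lau (Av m) := ∏ i : Fin m, (Xm (Av m) 0 1 - CC (Av m) (vv m i))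

/-- The complete homogeneous symmetric polynomial `H_k` in `X₁, X₂`. -/
def Hc (k : ℕ) : Lau A := ∑ i ∈ Finset.range (k + 1), Xm A (i : ℤ) ((k : ℤ) - (i : ℤ))

/-- The element `z = (-1)^{m+1} e_m + X₁X₂ ∑_{j=0}^{m-2} (-1)^j e_j H_{m-2-j}`. -/
def zel (m : ℕ) : Lau (Av m) :=
  CC (Av m) ((-1 : Av m) ^ (m + 1) * ev m m) +
    Xm (Av m) 1 1 *
      ∑ j ∈ Finset.range (m - 1), CC (Av m) ((-1 : Av m) ^ j * ev m j) * Hc (Av m) (m - 2 - j)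


/-- The monomial symmetric functions `m_{ij}`. -/
def msf (i j : ℤ) : Lau A := if i = j then Xm A i i else Xm A i j + Xm A j i

/-- The quotient `R_m` of the Laurent polynomial ring by the ideal generated
by `f_v(X₁)` and `f_v(X₂)`, free with basis the restricted monomials. -/
abbrev Rmq (m : ℕ) : Type := Lau (Av m) ⧸ Ideal.span {fv1 m, fv2 m}

/-- The quotient map onto `R_m`. -/
def pr (m : ℕ) : Lau (Av m) →+* Rmq m := Ideal.Quotient.mk _

/-!
Put `W_k = (X₂ᵏ f_v(X₁) - X₁ᵏ f_v(X₂)) / (X₁ - X₂)` (`fDivDiff m k`). Then `z = W_1`, and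
multiplying by `X₁ - X₂` shows `X₁^{k-1} z ≡ W_k` modulo `f_v(X₁)`. Expanding `f_v` by Vieta,
`W_k` is a combination of the polynomials `(X₁X₂)ᵃ H_t`, which unfold into the `m_{a+l, a+t-l}` via
`H_{t+2} = X₁^{t+2} + X₂^{t+2} + X₁X₂ H_t`. Only the leading term `(X₁X₂)ᵏ H_{m-1-k}` reaches
exponent `m - 1`, in `m_{k,m-1}`.

For independence, evaluate at `X₁ = vᵢ + ε`, `X₂ = vᵢ` over the dual numbers. This kills
`f_v(X₂)` and sends `f_v(X₁)` to `ε f_v'(vᵢ)`, so the diagonal evaluation `X₁ = X₂ = vᵢ` factors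
through `R_m`, and the ε-part of `(X₁ - X₂) z = X₂ f_v(X₁) - X₁ f_v(X₂)` gives
`z(vᵢ, vᵢ) = vᵢ f_v'(vᵢ) ≠ 0`. A relation `∑ g_k X₁^{k-1} z = 0` thus yields `∑ g_k vᵢᵏ = 0` for
every `i`, and the Vandermonde matrix of the distinct `vᵢ` forces `g = 0`.
-/

open Finset

section Laurent

variable {A}

lemma Xm_mul_Xm_s13 (a b c d : ℤ) : Xm A a b * Xm A c d = Xm A (a + c) (b + d) := by
  simp [Xm, AddMonoidAlgebra.single_mul_single]

lemma Xm_zero_zero : Xm A 0 0 = 1 := rfl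

lemma Xm_one_zero_pow (n : ℕ) : Xm A 1 0 ^ n = Xm A n 0 := by
  induction n with
  | zero => rfl
  | succ n ih => rw [pow_succ, ih, Xm_mul_Xm_s13]; push_cast; ring_nf

lemma Xm_zero_one_pow (n : ℕ) : Xm A 0 1 ^ n = Xm A 0 n := by
  induction n with
  | zero => rfl
  | succ n ih => rw [pow_succ, ih, Xm_mul_Xm_s13]; push_cast; ring_nf

/-- `hdiv t = H_{t-1} = (X₁ᵗ - X₂ᵗ) / (X₁ - X₂)`, shifted so that `hdiv 0 = 0`. -/
def hdiv (t : ℕ) : Lau A := ∑ i ∈ range t, Xm A i ((t : ℤ) - 1 - i)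

lemma Hc_eq_hdiv (k : ℕ) : Hc A k = hdiv (k + 1) := by
  unfold Hc hdiv
  refine sum_congr rfl fun i _ => ?_
  congr 1
  push_cast
  ring

@[simp] lemma hdiv_zero : hdiv (A := A) 0 = 0 := by simp [hdiv]

@[simp] lemma hdiv_one : hdiv (A := A) 1 = 1 := by simp [hdiv, Xm_zero_zero]

lemma sub_mul_hdiv (t : ℕ) : (Xm A 1 0 - Xm A 0 1) * hdiv t = Xm A t 0 - Xm A 0 t := by
  have hterm : ∀ i ∈ range t, (Xm A 1 0 - Xm A 0 1) * Xm A i ((t : ℤ) - 1 - i) =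
      Xm A (i + 1 : ℕ) ((t : ℤ) - (i + 1 : ℕ)) - Xm A i ((t : ℤ) - i) := by
    intro i _
    rw [sub_mul, Xm_mul_Xm_s13, Xm_mul_Xm_s13]
    congr 2 <;> push_cast <;> ring
  rw [hdiv, mul_sum, sum_congr rfl hterm, sum_range_sub (fun i : ℕ => Xm A i ((t : ℤ) - i))]
  simp

lemma Xm_mul_hdiv_add_two (a t : ℕ) :
    Xm A a a * hdiv (t + 2) = msf A a (a + t + 1 : ℕ) + Xm A (a + 1 : ℕ) (a + 1 : ℕ) * hdiv t := by
  have hsplit : hdiv (A := A) (t + 2) =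
      Xm A 1 1 * hdiv t + Xm A 0 (t + 1 : ℕ) + Xm A (t + 1 : ℕ) 0 := by
    rw [hdiv, sum_range_succ, sum_range_succ', hdiv, mul_sum]
    congr 2
    · refine sum_congr rfl fun i _ => ?_
      rw [Xm_mul_Xm_s13]
      congr 1 <;> push_cast <;> ring
    all_goals (congr 1; push_cast; ring)
  rw [msf, if_neg (by omega), hsplit, mul_add, mul_add, Xm_mul_Xm_s13, Xm_mul_Xm_s13, ← mul_assoc,
    Xm_mul_Xm_s13]
  push_cast
  ring_nf

def divDiff (k n : ℕ) : Lau A :=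
  if k ≤ n then Xm A k k * hdiv (n - k) else -(Xm A n n * hdiv (k - n))

lemma sub_mul_divDiff (k n : ℕ) :
    (Xm A 1 0 - Xm A 0 1) * divDiff k n = Xm A n k - Xm A k n := by
  unfold divDiff
  split_ifs with h
  · rw [mul_left_comm, sub_mul_hdiv, mul_sub, Xm_mul_Xm_s13, Xm_mul_Xm_s13]
    congr 1 <;> congr 1 <;> push_cast [h] <;> ring
  · rw [mul_neg, mul_left_comm, sub_mul_hdiv, mul_sub, Xm_mul_Xm_s13, Xm_mul_Xm_s13, neg_sub]
    congr 1 <;> congr 1 <;> push_cast [le_of_not_ge h] <;> ring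

@[simp] lemma divDiff_self (k : ℕ) : divDiff (A := A) k k = 0 := by simp [divDiff]

lemma divDiff_one_zero : divDiff (A := A) 1 0 = -1 := by simp [divDiff, Xm_zero_zero]

lemma X1_sub_X2_ne_zero [Nontrivial A] : Xm A 1 0 - Xm A 0 1 ≠ 0 := by
  rw [sub_ne_zero, Xm, Xm, Ne, AddMonoidAlgebra.single_left_inj one_ne_zero]
  simp

end Laurent

def fcoeff (m j : ℕ) : Av m := (-1) ^ j * ev m j

lemma prod_sub_vv_eq_sum {m : ℕ} {B : Type} [CommRing B] [Algebra (Av m) B] (x : B) :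
    ∏ i : Fin m, (x - algebraMap (Av m) B (vv m i)) =
      ∑ j ∈ range (m + 1), fcoeff m j • x ^ (m - j) := by
  have h := congrArg (Polynomial.aeval x)
    (Multiset.prod_X_sub_X_eq_sum_esymm (univ.val.map (vv m)))
  simp only [Multiset.map_map, Function.comp_def, Multiset.card_map, card_val, card_univ,
    Fintype.card_fin, map_multiset_prod, map_sub, Polynomial.aeval_X, Polynomial.aeval_C,
    map_sum, map_mul, map_pow, map_neg, map_one, Finset.esymm_map_val] at h
  rw [Finset.prod_eq_multiset_prod, h]
  refine sum_congr rfl fun j _ => ?_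
  simp only [fcoeff, ev, Algebra.smul_def, map_mul, map_pow, map_neg, map_one, map_sum, map_prod]
  ring

section FDivDiff

variable (m : ℕ)

lemma fv1_eq_sum : fv1 m = ∑ j ∈ range (m + 1), fcoeff m j • Xm (Av m) (m - j : ℕ) 0 := by
  unfold fv1 CC
  rw [prod_sub_vv_eq_sum]
  simp only [Xm_one_zero_pow]

lemma fv2_eq_sum : fv2 m = ∑ j ∈ range (m + 1), fcoeff m j • Xm (Av m) 0 (m - j : ℕ) := by
  unfold fv2 CC
  rw [prod_sub_vv_eq_sum]
  simp only [Xm_zero_one_pow]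

def fDivDiff (k : ℕ) : Lau (Av m) := ∑ j ∈ range (m + 1), fcoeff m j • divDiff k (m - j)

lemma sub_mul_fDivDiff (k : ℕ) :
    (Xm (Av m) 1 0 - Xm (Av m) 0 1) * fDivDiff m k =
      Xm (Av m) 0 k * fv1 m - Xm (Av m) k 0 * fv2 m := by
  rw [fDivDiff, fv1_eq_sum, fv2_eq_sum, mul_sum, mul_sum, mul_sum, ← sum_sub_distrib]
  refine sum_congr rfl fun j _ => ?_
  rw [mul_smul_comm, sub_mul_divDiff, mul_smul_comm, mul_smul_comm, ← smul_sub, Xm_mul_Xm_s13,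
    Xm_mul_Xm_s13]
  simp

lemma zel_eq_fDivDiff_one : zel m = fDivDiff m 1 := by
  rcases m with _ | n
  · simp [zel, fDivDiff, fcoeff, ev, divDiff_one_zero, CC, -AddMonoidAlgebra.coe_algebraMap]
  have hterm : ∀ j ∈ range n, fcoeff (n + 1) j • divDiff 1 (n + 1 - j) =
      Xm (Av (n + 1)) 1 1 *
        (CC (Av (n + 1)) (fcoeff (n + 1) j) * Hc (Av (n + 1)) (n + 1 - 2 - j)) := by
    intro j hj
    have hj : j < n := mem_range.mp hj
    rw [divDiff, if_pos (by omega), Hc_eq_hdiv, show n + 1 - 2 - j + 1 = n + 1 - j - 1 by omega,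
      CC, ← Algebra.smul_def, mul_smul_comm]
    push_cast
    rfl
  rw [zel, fDivDiff, sum_range_succ, sum_range_succ, sum_congr rfl hterm, ← mul_sum,
    Nat.add_sub_cancel, Nat.add_sub_cancel_left, Nat.sub_self, divDiff_self, divDiff_one_zero,
    smul_zero, add_zero, smul_neg, Algebra.smul_def, mul_one, fcoeff, CC, pow_succ, mul_neg_one,
    neg_mul, map_neg]
  exact add_comm _ _

lemma Xm_mul_zel_eq (k : ℕ) :
    Xm (Av m) ((k : ℤ) - 1) 0 * zel m =
      fDivDiff m k + Xm (Av m) (-1) 0 * divDiff 1 k * fv1 m := by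
  refine mul_left_cancel₀ X1_sub_X2_ne_zero ?_
  have h : (Xm (Av m) 1 0 - Xm (Av m) 0 1) * (Xm (Av m) (-1) 0 * divDiff 1 k * fv1 m) =
      Xm (Av m) (-1) 0 * ((Xm (Av m) 1 0 - Xm (Av m) 0 1) * divDiff 1 k) * fv1 m := by ring
  rw [mul_add, mul_left_comm, zel_eq_fDivDiff_one, sub_mul_fDivDiff, sub_mul_fDivDiff, h,
    sub_mul_divDiff]
  simp only [mul_sub, sub_mul, ← mul_assoc, Xm_mul_Xm_s13]
  ring_nf

lemma pr_Xm_mul_zel (k : ℕ) :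
    pr m (Xm (Av m) ((k : ℤ) - 1) 0 * zel m) = pr m (fDivDiff m k) := by
  rw [Xm_mul_zel_eq, map_add, add_eq_left, pr, Ideal.Quotient.eq_zero_iff_mem]
  exact Ideal.mul_mem_left _ _ (Ideal.subset_span (by simp))

end FDivDiff

section LowSpan

variable (m : ℕ)

abbrev lowIdx : Finset (Fin m × Fin m) :=
  univ.filter (fun ij : Fin m × Fin m => (ij.1 : ℕ) ≤ ij.2 ∧ (ij.2 : ℕ) + 2 ≤ m)

def lowSpan : Submodule (Av m) (Lau (Av m)) :=
  Submodule.span (Av m) ((fun ij : Fin m × Fin m => msf (Av m) (ij.1 : ℤ) (ij.2 : ℤ)) '' lowIdx m)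

variable {m}

lemma msf_mem_lowSpan {i j : ℕ} (hij : i ≤ j) (hj : j + 2 ≤ m) : msf (Av m) i j ∈ lowSpan m :=
  Submodule.subset_span ⟨(⟨i, by omega⟩, ⟨j, by omega⟩), by simp [hij, hj], rfl⟩

lemma Xm_mul_hdiv_mem_lowSpan {a t : ℕ} (h : a + t + 1 ≤ m) :
    Xm (Av m) a a * hdiv t ∈ lowSpan m := by
  induction t using Nat.strong_induction_on generalizing a with
  | _ t ih =>
    match t, ih with
    | 0, _ => simp
    | 1, _ => simpa [msf] using msf_mem_lowSpan (m := m) (le_refl a) (by omega)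
    | t + 2, ih =>
      rw [Xm_mul_hdiv_add_two]
      exact add_mem (msf_mem_lowSpan (by omega) (by omega)) (ih t (by omega) (by omega))

lemma divDiff_mem_lowSpan {k n : ℕ} (hk : k < m) (hn : n < m) : divDiff k n ∈ lowSpan m := by
  unfold divDiff
  split_ifs
  · exact Xm_mul_hdiv_mem_lowSpan (by omega)
  · exact neg_mem (Xm_mul_hdiv_mem_lowSpan (by omega))

lemma divDiff_sub_msf_mem_lowSpan {k : ℕ} (hk : k < m) :
    divDiff k m - msf (Av m) k ((m : ℤ) - 1) ∈ lowSpan m := by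
  obtain ⟨t, ht⟩ : ∃ t, m = k + t + 1 := ⟨m - k - 1, by omega⟩
  rcases t with _ | t
  · simp [divDiff, ht, msf]
  · rw [divDiff, if_pos (by omega), show m - k = t + 2 by omega, Xm_mul_hdiv_add_two,
      show (m : ℤ) - 1 = (k + t + 1 : ℕ) by omega, add_sub_cancel_left]
    exact Xm_mul_hdiv_mem_lowSpan (by omega)

lemma fDivDiff_sub_msf_mem_lowSpan {k : ℕ} (hk : k < m) :
    fDivDiff m k - msf (Av m) k ((m : ℤ) - 1) ∈ lowSpan m := by
  have hc0 : fcoeff m 0 = 1 := by simp [fcoeff, ev]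
  rw [fDivDiff, sum_range_succ', hc0, one_smul, Nat.sub_zero, add_sub_assoc]
  refine add_mem (sum_mem fun j hj => ?_) (divDiff_sub_msf_mem_lowSpan hk)
  exact Submodule.smul_mem _ _ (divDiff_mem_lowSpan hk (by omega))

lemma exists_eq_sum_of_mem_lowSpan {x : Lau (Av m)} (hx : x ∈ lowSpan m) :
    ∃ c : Fin m × Fin m → Av m,
      x = ∑ ij ∈ lowIdx m, c ij • msf (Av m) (ij.1 : ℤ) (ij.2 : ℤ) := by
  obtain ⟨c, hc⟩ := (Submodule.mem_span_image_finset_iff_exists_fun' (Av m)).mp hx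
  exact ⟨c, hc.symm⟩

end LowSpan

section Evaluation

variable {A} {B : Type} [CommRing B] [Algebra A B]

def lauEval (a b : Bˣ) : Lau A →ₐ[A] B :=
  AddMonoidAlgebra.lift A B (ℤ × ℤ) <| (Units.coeHom B).comp <|
    MonoidHom.mk' (fun g => a ^ g.toAdd.1 * b ^ g.toAdd.2) fun g h => by
      simp only [toAdd_mul, Prod.fst_add, Prod.snd_add, zpow_add]
      exact mul_mul_mul_comm ..

lemma lauEval_Xm (a b : Bˣ) (i j : ℤ) : lauEval a b (Xm A i j) = ((a ^ i * b ^ j : Bˣ) : B) := by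
  simp [lauEval, Xm]

@[simp] lemma lauEval_X1 (a b : Bˣ) : lauEval a b (Xm A 1 0) = a := by simp [lauEval_Xm]

@[simp] lemma lauEval_X2 (a b : Bˣ) : lauEval a b (Xm A 0 1) = b := by simp [lauEval_Xm]

end Evaluation

lemma TrivSqZeroExt.inr_one_mul {R : Type} [CommRing R] (y : DualNumber R) :
    inr 1 * y = inr y.fst := by
  ext <;> simp

section Diagonal

open TrivSqZeroExt

variable {m : ℕ}

lemma isUnit_vv (i : Fin m) : IsUnit (vv m i) :=
  (Group.isUnit (Multiplicative.ofAdd ((0 : ℤ), (Pi.single i 1 : Fin m → ℤ)))).map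
    (AddMonoidAlgebra.of ℤ _)

lemma vv_injective : Function.Injective (vv m) := by
  intro i l h
  simpa [Pi.single_apply] using
    congrFun (congrArg Prod.snd ((AddMonoidAlgebra.single_left_inj one_ne_zero).mp h)) i

/-- `vdiff i = f_v'(vᵢ)`. -/
def vdiff (i : Fin m) : Av m := ∏ l ∈ univ.erase i, (vv m i - vv m l)

lemma vdiff_ne_zero (i : Fin m) : vdiff i ≠ 0 :=
  prod_ne_zero_iff.mpr fun _ hl => sub_ne_zero.mpr (vv_injective.ne (ne_of_mem_erase hl).symm)

def evalDual (i : Fin m) : Lau (Av m) →ₐ[Av m] DualNumber (Av m) :=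
  lauEval (isUnit_iff_isUnit_fst.mpr (by simpa using isUnit_vv i) :
      IsUnit (inl (vv m i) + inr 1 : DualNumber (Av m))).unit
    (isUnit_inl_iff.mpr (isUnit_vv i)).unit

@[simp] lemma evalDual_X1 (i : Fin m) : evalDual i (Xm (Av m) 1 0) = inl (vv m i) + inr 1 :=
  lauEval_X1 _ _

@[simp] lemma evalDual_X2 (i : Fin m) : evalDual i (Xm (Av m) 0 1) = inl (vv m i) :=
  lauEval_X2 _ _

@[simp] lemma evalDual_CC (i : Fin m) (r : Av m) : evalDual i (CC (Av m) r) = inl r :=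
  (evalDual i).commutes r

lemma evalDual_fv1 (i : Fin m) : evalDual i (fv1 m) = inr (vdiff i) := by
  have hfac : ∀ l, evalDual i (Xm (Av m) 1 0 - CC (Av m) (vv m l)) =
      inl (vv m i - vv m l) + inr 1 := by
    intro l
    ext <;> simp
  rw [fv1, map_prod, prod_congr rfl fun l _ => hfac l, ← mul_prod_erase _ _ (mem_univ i),
    sub_self, inl_zero, zero_add, inr_one_mul, vdiff, ← fstHom_apply (S := Av m), map_prod]
  simp

lemma evalDual_fv2 (i : Fin m) : evalDual i (fv2 m) = 0 := by
  rw [fv2, map_prod]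
  exact prod_eq_zero (mem_univ i) (by simp)

lemma fst_evalDual_zel (i : Fin m) : (evalDual i (zel m)).fst = vv m i * vdiff i := by
  have h := congrArg (evalDual i) (sub_mul_fDivDiff m 1)
  simp only [map_mul, map_sub, evalDual_X1, evalDual_X2, evalDual_fv1, evalDual_fv2,
    ← zel_eq_fDivDiff_one, Nat.cast_one, mul_zero, sub_zero, add_sub_cancel_left, inr_one_mul,
    inl_mul_inr, smul_eq_mul] at h
  exact inr_injective h

def evalDiag (i : Fin m) : Rmq m →ₐ[Av m] Av m :=
  Ideal.Quotient.liftₐ _ ((fstHom (Av m) (Av m) (Av m)).comp (evalDual i)) fun a ha => by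
    obtain ⟨x, y, rfl⟩ := Ideal.mem_span_pair.mp ha
    simp [evalDual_fv1, evalDual_fv2]

lemma evalDiag_pr (i : Fin m) (x : Lau (Av m)) : evalDiag i (pr m x) = (evalDual i x).fst := rfl

lemma evalDiag_pr_Xm_mul_zel (i : Fin m) (k : ℕ) :
    evalDiag i (pr m (Xm (Av m) ((k : ℤ) - 1) 0 * zel m)) = vv m i ^ k * vdiff i := by
  have hpow : (evalDual i (Xm (Av m) ((k : ℤ) - 1) 0)).fst * vv m i = vv m i ^ k := by
    have h := congrArg (fun x => (evalDual i x).fst) (Xm_mul_Xm_s13 (A := Av m) ((k : ℤ) - 1) 0 1 0)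
    simpa only [map_mul, fst_mul, evalDual_X1, fst_add, fst_inl, fst_inr, add_zero,
      sub_add_cancel, ← Xm_one_zero_pow, map_pow, fst_pow] using h
  rw [evalDiag_pr, map_mul, fst_mul, fst_evalDual_zel, ← mul_assoc, hpow]

end Diagonal

theorem stmt13_general (m : ℕ) :
    LinearIndependent (Av m)
      (fun k : Fin m => pr m (Xm (Av m) ((k : ℤ) - 1) 0 * zel m)) ∧
    ∀ k : Fin m, ∃ c : Fin m × Fin m → Av m,
      pr m (Xm (Av m) ((k : ℤ) - 1) 0 * zel m) =
        pr m (msf (Av m) (k : ℤ) ((m : ℤ) - 1) +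
          ∑ ij ∈ Finset.univ.filter
              (fun ij : Fin m × Fin m => (ij.1 : ℕ) ≤ ij.2 ∧ (ij.2 : ℕ) + 2 ≤ m),
            c ij • msf (Av m) (ij.1 : ℤ) (ij.2 : ℤ)) := by
  refine ⟨Fintype.linearIndependent_iff.mpr fun g hg k => ?_, fun k => ?_⟩
  · refine congrFun (Matrix.eq_zero_of_forall_index_sum_mul_pow_eq_zero vv_injective fun i => ?_) k
    have h := congrArg (evalDiag i) hg
    simp only [map_sum, map_smul, evalDiag_pr_Xm_mul_zel, smul_eq_mul, map_zero, ← mul_assoc,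
      ← sum_mul] at h
    exact (mul_eq_zero.mp h).resolve_right (vdiff_ne_zero i)
  · obtain ⟨c, hc⟩ := exists_eq_sum_of_mem_lowSpan (fDivDiff_sub_msf_mem_lowSpan k.isLt)
    exact ⟨c, by rw [← hc, add_sub_cancel, pr_Xm_mul_zel]⟩

theorem stmt13 (m : ℕ) (hm : 1 ≤ m) :
    LinearIndependent (Av m)
      (fun k : Fin m => pr m (Xm (Av m) ((k : ℤ) - 1) 0 * zel m)) ∧
    ∀ k : Fin m, ∃ c : Fin m × Fin m → Av m,
      pr m (Xm (Av m) ((k : ℤ) - 1) 0 * zel m) =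
        pr m (msf (Av m) (k : ℤ) ((m : ℤ) - 1) +
          ∑ ij ∈ Finset.univ.filter
              (fun ij : Fin m × Fin m => (ij.1 : ℕ) ≤ ij.2 ∧ (ij.2 : ℕ) + 2 ≤ m),
            c ij • msf (Av m) (ij.1 : ℤ) (ij.2 : ℤ)) :=
  stmt13_general m
end
end
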